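/- arXiv:1812.00468 — 5 statements merged into one kernel-verified Lean document; each statement's English description precedes it below -/
import Mathlib

section
/- Fix n ≥ 1 and M ≥ 1. Let R = MvPolynomial ((Fin n) × (Fin n)) ℚ, and let A be the n × n matrix over R whose (i,j) entry is the variable X_{(i,j)}. Let m : (Fin n) × (Fin n) → ℕ satisfy Σ_p m(p) = M. Then applying, for each pair p = (i,j), the partial derivative ∂/∂X_{(i,j)} exactly m(i,j) times to the polynomial trace(A^M) yields the constant polynomial (Π_p m(p)!) · N(m), where N(m) is the number of functions α : ZMod M → Fin n such that for every pair (i,j), the number of t ∈ ZMod M with α(t) = i and α(t+1) = j equals m(i,j). (Equivalently, the result equals the number of Euler tours of the multidigraph having m(i,j) distinguishable edges directed from i to j, which is |E(D)|·|𝔈(D)| where 𝔈(D) is the set of Euler circuits of D.) -/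
/-!
Expanding the matrix power, `trace (A ^ M)` is the sum over closed walks `α : ZMod M → Fin n`
of the monomial `∏ₜ X (α t, α (t + 1))`, whose exponent counts how often each edge `(i, j)` is
traversed. All these monomials have degree `M`, which is also the order of the derivative
`∂^L = ∏ₚ ∂_p ^ m p`; such a derivative kills every monomial of degree `M` except
`∏ₚ X p ^ m p`, which it sends to `∏ₚ m(p)!`. So the result is `∏ₚ m(p)!` times the number of
closed walks with transition counts `m`.
-/

open Finset MvPolynomial

namespace Matrix

variable {ι R : Type*} [Fintype ι] [DecidableEq ι] [CommSemiring R]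

theorem pow_succ_apply_eq_sum_walks (A : Matrix ι ι R) (k : ℕ) (i j : ι) :
    (A ^ (k + 1)) i j =
      ∑ g : Fin k → ι, ∏ t : Fin (k + 1),
        A ((Fin.cons i g : Fin (k + 1) → ι) t) (Fin.snoc (α := fun _ => ι) g j t) := by
  induction k generalizing i with
  | zero => simp [Fin.snoc]
  | succ k ih =>
    rw [pow_succ', mul_apply, ← (Fin.consEquiv fun _ : Fin (k + 1) => ι).sum_comp,
      Fintype.sum_prod_type]
    refine sum_congr rfl fun l _ => ?_
    simp only [ih, mul_sum]
    refine sum_congr rfl fun g _ => ?_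
    show _ = ∏ t : Fin (k + 2),
      A ((Fin.cons i (Fin.cons l g) : Fin (k + 2) → ι) t)
        (Fin.snoc (α := fun _ => ι) (Fin.cons l g) j t)
    rw [← Fin.cons_snoc_eq_snoc_cons, Fin.prod_univ_succ (n := k + 1)]
    simp only [Fin.cons_zero, Fin.cons_succ]

theorem trace_pow_succ_eq_sum_fin_walks (A : Matrix ι ι R) (k : ℕ) :
    trace (A ^ (k + 1)) = ∑ g : Fin (k + 1) → ι, ∏ t, A (g t) (g (t + 1)) := by
  have hsnoc : ∀ (i : ι) (g : Fin k → ι) (t : Fin (k + 1)),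
      Fin.snoc (α := fun _ => ι) g i t = (Fin.cons i g : Fin (k + 1) → ι) (t + 1) := by
    intro i g t
    induction t using Fin.lastCases with
    | last => simp
    | cast s => simp [Fin.coeSucc_eq_succ]
  simp only [trace, diag_apply, pow_succ_apply_eq_sum_walks, hsnoc]
  rw [← (Fin.consEquiv fun _ : Fin (k + 1) => ι).sum_comp, Fintype.sum_prod_type]
  rfl

theorem trace_pow_eq_sum_zmod_walks (A : Matrix ι ι R) (M : ℕ) [NeZero M] :
    trace (A ^ M) = ∑ α : ZMod M → ι, ∏ t, A (α t) (α (t + 1)) := by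
  obtain ⟨k, rfl⟩ := Nat.exists_eq_succ_of_ne_zero (NeZero.ne M)
  -- `ZMod (k + 1)` is `Fin (k + 1)` by definition.
  exact trace_pow_succ_eq_sum_fin_walks A k

end Matrix

namespace MvPolynomial

variable {σ R : Type*} [CommSemiring R] [DecidableEq σ]

theorem multiset_prod_X_eq_monomial (S : Multiset σ) :
    (S.map fun p => (X p : MvPolynomial σ R)).prod = monomial (Multiset.toFinsupp S) 1 := by
  induction S using Multiset.induction_on with
  | empty => simp
  | cons p S ih =>
    rw [Multiset.map_cons, Multiset.prod_cons, ih, ← Multiset.singleton_add, map_add,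
      Multiset.toFinsupp_singleton, X, monomial_mul, one_mul]

theorem prod_X_eq_monomial {T : Type*} (s : Finset T) (e : T → σ) :
    ∏ t ∈ s, (X (e t) : MvPolynomial σ R) = monomial (Multiset.toFinsupp (s.val.map e)) 1 := by
  rw [← multiset_prod_X_eq_monomial, Multiset.map_map]
  rfl

omit [DecidableEq σ] in
theorem foldr_pderiv_eq_list_prod (L : List σ) (f : MvPolynomial σ R) :
    L.foldr (fun p f => pderiv p f) f =
      (L.map fun p => ((pderiv p).toLinearMap : Module.End R (MvPolynomial σ R))).prod f := by
  induction L with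
  | nil => rfl
  | cons p L ih => simp [ih]

theorem prod_descFactorial_count_cons [Fintype σ] (d : σ → ℕ) (p : σ) (s : Multiset σ) :
    ∏ q, (d q).descFactorial ((p ::ₘ s).count q) =
      (∏ q, (d q).descFactorial (s.count q)) * (d p - s.count p) := by
  have hq : ∀ q, (d q).descFactorial ((p ::ₘ s).count q) =
      (d q).descFactorial (s.count q) * if q = p then d q - s.count q else 1 := by
    intro q
    by_cases h : q = p
    · subst h
      simp [Nat.descFactorial_succ, mul_comm]
    · simp [h]
  rw [prod_congr rfl fun q _ => hq q, prod_mul_distrib, prod_ite_eq']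
  simp

theorem foldr_pderiv_monomial [Fintype σ] (L : List σ) (d : σ →₀ ℕ) (c : R) :
    L.foldr (fun p f => pderiv p f) (monomial d c) =
      monomial (d - Multiset.toFinsupp L)
        (c * ∏ p, ((d p).descFactorial (Multiset.count p (L : Multiset σ)) : R)) := by
  induction L with
  | nil => simp
  | cons p L ih =>
    rw [List.foldr_cons, ih, pderiv_monomial, ← Multiset.cons_coe, ← Multiset.singleton_add,
      map_add, Multiset.toFinsupp_singleton, add_comm, ← tsub_tsub, Finsupp.tsub_apply,
      Multiset.toFinsupp_apply, Multiset.singleton_add, ← Nat.cast_prod, ← Nat.cast_prod,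
      prod_descFactorial_count_cons, Nat.cast_mul, mul_assoc]

theorem foldr_pderiv_monomial_toFinsupp_of_card_eq [Fintype σ] (L : List σ) (s : Multiset σ)
    (hs : Multiset.card s = L.length) :
    L.foldr (fun p f => pderiv p f) (monomial (Multiset.toFinsupp s) (1 : R)) =
      if s = L then C (∏ p, ((Multiset.count p (L : Multiset σ)).factorial : R)) else 0 := by
  rw [foldr_pderiv_monomial]
  split_ifs with h
  · subst h
    simp [Nat.descFactorial_self]
  · obtain ⟨p, hp⟩ : ∃ p, s.count p < Multiset.count p L := by
      by_contra! hle
      exact h (Multiset.eq_of_le_of_card_le (Multiset.le_iff_count.mpr hle) (by simp [hs])).symm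
    rw [prod_eq_zero (mem_univ p) (by
      rw [Multiset.toFinsupp_apply, Nat.descFactorial_eq_zero_iff_lt.mpr hp, Nat.cast_zero]),
      mul_zero, monomial_zero]

theorem foldr_pderiv_sum_monomial [Fintype σ] {T : Type*} [Fintype T] (L : List σ)
    (e : T → Multiset σ) (he : ∀ t, Multiset.card (e t) = L.length) :
    L.foldr (fun p f => pderiv p f) (∑ t, monomial (Multiset.toFinsupp (e t)) (1 : R)) =
      C (((∏ p, (Multiset.count p (L : Multiset σ)).factorial) * #{t | e t = L} : ℕ) : R) := by
  rw [foldr_pderiv_eq_list_prod, map_sum]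
  simp only [← foldr_pderiv_eq_list_prod, foldr_pderiv_monomial_toFinsupp_of_card_eq _ _ (he _)]
  rw [sum_ite, sum_const_zero, add_zero, sum_const, nsmul_eq_mul]
  simp [mul_comm]

end MvPolynomial

theorem Multiset.count_map_univ_val {T β : Type*} [Fintype T] [DecidableEq β] (e : T → β)
    (b : β) :
    ((univ : Finset T).val.map e).count b = Nat.card {t // e t = b} := by
  rw [Multiset.count_map, Nat.card_eq_fintype_card, Fintype.card_subtype, ← Finset.filter_val]
  simp only [eq_comm]
  rfl

theorem pderiv_trace_pow_eq_euler_tours_general (n M : ℕ) (hM : 1 ≤ M)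
    (m : Fin n × Fin n → ℕ) (hm : ∑ p : Fin n × Fin n, m p = M)
    (L : List (Fin n × Fin n)) (hL : ∀ p, L.count p = m p) :
    L.foldr (fun p f => MvPolynomial.pderiv p f)
        (Matrix.trace
          ((Matrix.of fun i j : Fin n =>
            (MvPolynomial.X (i, j) : MvPolynomial (Fin n × Fin n) ℚ)) ^ M)) =
      MvPolynomial.C
        (((∏ p : Fin n × Fin n, (m p).factorial) *
          Nat.card {α : ZMod M → Fin n //
            ∀ p : Fin n × Fin n,
              Nat.card {t : ZMod M // α t = p.1 ∧ α (t + 1) = p.2} = m p} : ℕ) : ℚ) := by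
  have : NeZero M := ⟨by omega⟩
  -- `hL` counts with the `BEq` instance of the product type, `Multiset.count` with `DecidableEq`.
  have hcount : ∀ p, Multiset.count p (L : Multiset (Fin n × Fin n)) = m p := by
    intro p
    rw [Multiset.coe_count, ← hL]
    congr!
  have hlen : L.length = M := by
    rw [← Multiset.coe_card, ← hm, ← Multiset.sum_count_eq_card (s := univ) (by simp)]
    simp only [hcount]
  have hwalks : ∀ α : ZMod M → Fin n,
      (univ.val.map fun t => (α t, α (t + 1))) = (L : Multiset (Fin n × Fin n)) ↔
        ∀ p : Fin n × Fin n, Nat.card {t : ZMod M // α t = p.1 ∧ α (t + 1) = p.2} = m p := by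
    intro α
    simp only [Multiset.ext, Multiset.count_map_univ_val, hcount, Prod.ext_iff]
  simp only [Matrix.trace_pow_eq_sum_zmod_walks, Matrix.of_apply, prod_X_eq_monomial]
  rw [foldr_pderiv_sum_monomial _ _ fun α => by simp [hlen, ZMod.card]]
  simp only [hcount, hwalks, Nat.card_eq_fintype_card, Fintype.card_subtype]

/-- Applying, for each pair `p = (i,j)`, the partial derivative `∂/∂X_{(i,j)}` exactly
`m (i,j)` times (in any order, encoded by a list `L` whose multiplicities are `m`) to the
polynomial `trace (A ^ M)`, where `A` is the generic `n × n` matrix of variables, yields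
the constant polynomial `(∏_p m(p)!) · N(m)`, where `N(m)` counts the closed walks
`α : ZMod M → Fin n` whose transition counts are given by `m` (equivalently, the Euler
tours of the associated multidigraph). -/
theorem pderiv_trace_pow_eq_euler_tours (n M : ℕ) (hn : 1 ≤ n) (hM : 1 ≤ M)
    (m : Fin n × Fin n → ℕ) (hm : ∑ p : Fin n × Fin n, m p = M)
    (L : List (Fin n × Fin n)) (hL : ∀ p, L.count p = m p) :
    L.foldr (fun p f => MvPolynomial.pderiv p f)
        (Matrix.trace
          ((Matrix.of fun i j : Fin n =>
            (MvPolynomial.X (i, j) : MvPolynomial (Fin n × Fin n) ℚ)) ^ M)) =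
      MvPolynomial.C
        (((∏ p : Fin n × Fin n, (m p).factorial) *
          Nat.card {α : ZMod M → Fin n //
            ∀ p : Fin n × Fin n,
              Nat.card {t : ZMod M // α t = p.1 ∧ α (t + 1) = p.2} = m p} : ℕ) : ℚ) :=
  pderiv_trace_pow_eq_euler_tours_general n M hM m hm L hL
end

section
/- Let n ≥ 1, let σ be a permutation of Fin (n+1), let M_σ be its permutation matrix over ℚ, and let J be the (n+1) × (n+1) all-ones matrix over ℚ. Then, as polynomials in ℚ[X], charpoly(M_σ − J) · (X − 1) = charpoly(M_σ) · (X + n). Equivalently, the spectrum (with multiplicity) of M_σ − J is obtained from the spectrum of M_σ by deleting one copy of the eigenvalue 1 and inserting the eigenvalue −n. -/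
/-!
The characteristic matrix of `M_σ - J` is `B + u uᵀ`, where `B = X - M_σ` and `u` is the all-ones
vector; since `M_σ` has row sums `1`, `B u = μ u` with `μ = X - 1`. Whenever `B u = μ u`, one has
`μ (B + u vᵀ) = B (μ + u vᵀ)` and `det (μ + u vᵀ) = μ^(k-1) (μ + u ⬝ v)`; cancelling the regular
element `μ^(k-1)` gives `det (B + u vᵀ) · μ = det B · (μ + u ⬝ v)`, and here `μ + u ⬝ u = X + n`.
-/

open Polynomial Matrix

namespace Matrix

variable {m R : Type*} [Fintype m] [DecidableEq m] [CommRing R]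

theorem det_scalar_add_vecMulVec (μ : R) (u v : m → R) :
    (scalar m μ + vecMulVec u v).det =
      μ ^ Fintype.card m + (u ⬝ᵥ v) * μ ^ (Fintype.card m - 1) := by
  have h := eval_charpoly (vecMulVec (-u) v) μ
  rw [charpoly_vecMulVec, neg_vecMulVec, sub_neg_eq_add] at h
  rw [← h]
  simp [neg_dotProduct, smul_eq_C_mul]

theorem det_add_vecMulVec_mul_of_mulVec_eq_smul {B : Matrix m m R} {u : m → R} {μ : R}
    (hμ : IsRegular μ) (hB : B *ᵥ u = μ • u) (v : m → R) :
    (B + vecMulVec u v).det * μ = B.det * (μ + u ⬝ᵥ v) := by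
  rcases isEmpty_or_nonempty m with hm | hm
  · simp
  obtain ⟨k, hk⟩ : ∃ k, Fintype.card m = k + 1 :=
    Nat.exists_eq_succ_of_ne_zero Fintype.card_ne_zero
  have hfactor : μ • (B + vecMulVec u v) = B * (scalar m μ + vecMulVec u v) := by
    rw [Matrix.mul_add, mul_vecMulVec, hB, smul_add, smul_vecMulVec, scalar_apply,
      ← smul_one_eq_diagonal, Matrix.mul_smul, Matrix.mul_one]
  have hdet := congrArg det hfactor
  rw [det_smul, det_mul, det_scalar_add_vecMulVec, hk, Nat.add_sub_cancel] at hdet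
  refine (hμ.pow k).left ?_
  linear_combination hdet

theorem charmatrix_sub_vecMulVec (A : Matrix m m R) (u v : m → R) :
    charmatrix (A - vecMulVec u v) = charmatrix A + vecMulVec (C ∘ u) (C ∘ v) := by
  ext i j : 1
  simp only [charmatrix_apply, sub_apply, add_apply, vecMulVec_apply, Function.comp_apply,
    map_sub, map_mul]
  ring

theorem charmatrix_mulVec_of_mulVec_eq_smul {A : Matrix m m R} {u : m → R} {c : R}
    (hA : A *ᵥ u = c • u) : charmatrix A *ᵥ (C ∘ u) = (X - C c) • (C ∘ u) := by
  ext i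
  have hi := RingHom.map_mulVec C A u i
  rw [hA, Pi.smul_apply, smul_eq_mul, map_mul] at hi
  simp [charmatrix, sub_mulVec, ← hi, sub_mul]

theorem charpoly_sub_vecMulVec_mul_of_mulVec_eq_smul {A : Matrix m m R} {u : m → R} {c : R}
    (hA : A *ᵥ u = c • u) (v : m → R) :
    (A - vecMulVec u v).charpoly * (X - C c) = A.charpoly * (X - C (c - u ⬝ᵥ v)) := by
  have hdot : (C ∘ u) ⬝ᵥ (C ∘ v) = C (u ⬝ᵥ v) := by
    simp [dotProduct, map_sum]
  rw [charpoly, charmatrix_sub_vecMulVec,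
    det_add_vecMulVec_mul_of_mulVec_eq_smul (monic_X_sub_C c).isRegular
      (charmatrix_mulVec_of_mulVec_eq_smul hA), hdot, charpoly, C_sub]
  ring

end Matrix

theorem charpoly_permMatrix_sub_allOnes_general (n : ℕ)
    (σ : Equiv.Perm (Fin (n + 1))) :
    Matrix.charpoly
        ((Matrix.of fun i j => if σ j = i then (1 : ℚ) else 0) -
          Matrix.of fun _ _ => (1 : ℚ)) * (Polynomial.X - 1) =
      Matrix.charpoly (Matrix.of fun i j => if σ j = i then (1 : ℚ) else 0) *
        (Polynomial.X + Polynomial.C (n : ℚ)) := by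
  set M : Matrix (Fin (n + 1)) (Fin (n + 1)) ℚ := of fun i j => if σ j = i then 1 else 0
  have hrowSum : M *ᵥ 1 = (1 : ℚ) • 1 := by
    ext i
    simp [M, mulVec, dotProduct, ← Equiv.eq_symm_apply]
  have hallOnes : (of fun _ _ => 1 : Matrix (Fin (n + 1)) (Fin (n + 1)) ℚ) = vecMulVec 1 1 := by
    ext i j
    simp [vecMulVec_apply]
  have hshift : X - C (1 - (1 : Fin (n + 1) → ℚ) ⬝ᵥ 1) = X + C (n : ℚ) := by
    simp
  rw [hallOnes, ← hshift, ← C_1]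
  exact charpoly_sub_vecMulVec_mul_of_mulVec_eq_smul hrowSum 1

/-- For a permutation `σ` of `Fin (n+1)` with permutation matrix `M_σ` (entry `(i,j)` equal
to `1` iff `σ j = i`) and `J` the all-ones matrix, the spectrum of `M_σ - J` is obtained from
that of `M_σ` by deleting one copy of the eigenvalue `1` and inserting `-n`; as polynomials,
`charpoly (M_σ - J) · (X - 1) = charpoly (M_σ) · (X + n)`. -/
theorem charpoly_permMatrix_sub_allOnes (n : ℕ) (hn : 1 ≤ n)
    (σ : Equiv.Perm (Fin (n + 1))) :
    Matrix.charpoly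
        ((Matrix.of fun i j => if σ j = i then (1 : ℚ) else 0) -
          Matrix.of fun _ _ => (1 : ℚ)) * (Polynomial.X - 1) =
      Matrix.charpoly (Matrix.of fun i j => if σ j = i then (1 : ℚ) else 0) *
        (Polynomial.X + Polynomial.C (n : ℚ)) :=
  charpoly_permMatrix_sub_allOnes_general n σ
end

section
/- Let k ≥ 2 and let σ be a derangement of Fin (k+1) (a permutation with σ(j) ≠ j for all j). Let M_σ be its permutation matrix over ℚ, J the (k+1) × (k+1) all-ones matrix, and I the identity. Then, as polynomials in ℚ[X], charpoly(k·I + M_σ − J) · (X − (k+1)) = X · Π_{ℓ ∈ cycleType(σ)} ((X − k)^ℓ − 1), where cycleType(σ) is the multiset of cycle lengths of σ (each ≥ 2, summing to k+1). -/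
/-!
Let `A = k • 1 + M_σ`, whose column sums are all `k + 1`. Replacing a row of `X - A` by the sum
of all rows pulls out the factor `X - (k + 1)`; doing the same for `X - (A - J)` pulls out `X`, and
what remains of the two matrices differs only by row operations. Hence
`charpoly (A - J) * (X - (k + 1)) = charpoly A * X`.
Moreover `charpoly A` is `charpoly M_σ` evaluated at `X - k`, and the characteristic polynomial of
a permutation matrix is `∏ (X ^ ℓ - 1)` over its cycles, fixed points counting as `ℓ = 1`: the
matrix is block diagonal along the cycles, and for a full `ℓ`-cycle it is the matrix of
multiplication by the root of `X ^ ℓ - 1` in the power basis of `K[X] ⧸ (X ^ ℓ - 1)`, whose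
characteristic polynomial is the minimal polynomial `X ^ ℓ - 1`.
-/

open Polynomial Matrix Equiv Finset

theorem PowerBasis.leftMulMatrix_gen_eq_transpose_permMatrix_finRotate {R S : Type*}
    [CommRing R] [Ring S] [Algebra R S] (pb : PowerBasis R S) (h : pb.gen ^ pb.dim = 1) :
    Algebra.leftMulMatrix pb.basis pb.gen = ((finRotate pb.dim).permMatrix R)ᵀ := by
  ext i j
  have : NeZero pb.dim := j.neZero
  have hmul : pb.gen * pb.basis j = pb.basis (finRotate pb.dim j) := by
    rw [pb.basis_eq_pow, pb.basis_eq_pow, finRotate_apply, ← pow_succ', Fin.val_add,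
      pow_eq_pow_mod _ h]
    simp
  rw [Algebra.leftMulMatrix_eq_repr_mul, hmul, pb.basis.repr_self]
  simp [PEquiv.toMatrix_apply, Finsupp.single_apply]

namespace Matrix

variable {R : Type*} [CommRing R] {m n : Type*} [Fintype m] [DecidableEq m] [Fintype n]
  [DecidableEq n]

theorem charpoly_permMatrix_finRotate {K : Type*} [Field K] {ℓ : ℕ} (hℓ : ℓ ≠ 0) :
    ((finRotate ℓ).permMatrix K).charpoly = X ^ ℓ - 1 := by
  have hmonic : (X ^ ℓ - 1 : K[X]).Monic := monic_X_pow_sub_C 1 hℓ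
  let pb := AdjoinRoot.powerBasis hmonic.ne_zero
  have hdim : pb.dim = ℓ := natDegree_X_pow_sub_C
  have hgen : pb.gen ^ pb.dim = 1 := by
    rw [hdim, ← sub_eq_zero]
    have := AdjoinRoot.eval₂_root (X ^ ℓ - 1 : K[X])
    rwa [eval₂_sub, eval₂_X_pow, eval₂_one] at this
  have := charpoly_leftMulMatrix pb
  rw [pb.leftMulMatrix_gen_eq_transpose_permMatrix_finRotate hgen, charpoly_transpose,
    AdjoinRoot.minpoly_powerBasis_gen_of_monic hmonic] at this
  rwa [hdim] at this

theorem charpoly_permMatrix_of_semiconj {σ : Perm m} {τ : Perm n} (e : m ≃ n)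
    (h : ∀ x, τ (e x) = e (σ x)) :
    (τ.permMatrix R).charpoly = (σ.permMatrix R).charpoly := by
  have : τ.permMatrix R = reindex e e (σ.permMatrix R) := by
    ext i j
    obtain ⟨x, rfl⟩ := e.surjective i
    simp [PEquiv.toMatrix_apply, h, e.eq_symm_apply]
  rw [this, charpoly_reindex]

theorem charpoly_permMatrix_of_cycleType_eq_card {K : Type*} [Field K] {σ : Perm n}
    (hσ : σ.cycleType = {Fintype.card n}) :
    (σ.permMatrix K).charpoly = X ^ Fintype.card n - 1 := by
  have h2 : 2 ≤ Fintype.card n := σ.two_le_of_mem_cycleType (by simp [hσ])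
  -- `extendDomain` serves only to move `σ` to `Fin (card n)` with a known `cycleType`.
  let f : n ≃ {i : Fin (Fintype.card n) // True} :=
    (Fintype.equivFin n).trans (subtypeUnivEquiv fun _ => trivial).symm
  obtain ⟨π, hπ⟩ := isConj_iff.mp <| Perm.isConj_of_cycleType_eq <|
    (σ.cycleType_extendDomain f).trans (hσ.trans (cycleType_finRotate_of_le h2).symm)
  calc (σ.permMatrix K).charpoly = ((σ.extendDomain f).permMatrix K).charpoly :=
        (charpoly_permMatrix_of_semiconj (f.trans (subtypeUnivEquiv fun _ => trivial))
          (σ.extendDomain_apply_image f)).symm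
    _ = ((finRotate _).permMatrix K).charpoly :=
        (charpoly_permMatrix_of_semiconj π fun x => by simp [← hπ]).symm
    _ = X ^ Fintype.card n - 1 := charpoly_permMatrix_finRotate (by lia)

theorem charpoly_permMatrix_eq_mul_subtypePerm (σ : Perm n) (p : n → Prop) [DecidablePred p]
    (h : ∀ x, p (σ x) ↔ p x) :
    (σ.permMatrix R).charpoly = ((σ.subtypePerm h).permMatrix R).charpoly *
      ((σ.subtypePerm (p := fun x => ¬ p x) (fun x => not_congr (h x))).permMatrix R).charpoly := by
  rw [← charpoly_reindex (sumCompl p).symm, ← charpoly_fromBlocks_zero₁₂ (M₂₁ := 0)]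
  congr 1
  ext (i | i) (j | j) <;> simp [PEquiv.toMatrix_apply, Subtype.ext_iff]
  · exact fun hij => absurd (hij ▸ (h i).mpr i.2) j.2
  · exact fun hij => absurd ((h i).mp (hij ▸ j.2)) i.2

theorem charpoly_permMatrix_mul_of_disjoint {σ τ : Perm n} (hd : σ.Disjoint τ) :
    ((σ * τ).permMatrix R).charpoly * (X - 1) ^ Fintype.card n =
      (σ.permMatrix R).charpoly * (τ.permMatrix R).charpoly := by
  have hσ (x : n) : σ x ∈ σ.support ↔ x ∈ σ.support := Perm.apply_mem_support
  have hτ (x : n) : τ x ∈ σ.support ↔ x ∈ σ.support := by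
    by_cases hx : x ∈ τ.support
    · exact iff_of_false (hd.symm.mem_imp (Perm.apply_mem_support.mpr hx)) (hd.symm.mem_imp hx)
    · rw [Perm.notMem_support.mp hx]
  have hστ (x : n) : (σ * τ) x ∈ σ.support ↔ x ∈ σ.support := by rw [Perm.mul_apply, hσ, hτ]
  have h1 (x : n) : (1 : Perm n) x ∈ σ.support ↔ x ∈ σ.support := Iff.rfl
  rw [← charpoly_one, ← permMatrix_one, charpoly_permMatrix_eq_mul_subtypePerm _ _ hστ,
    charpoly_permMatrix_eq_mul_subtypePerm _ _ hσ, charpoly_permMatrix_eq_mul_subtypePerm _ _ hτ,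
    charpoly_permMatrix_eq_mul_subtypePerm _ _ h1]
  have hστ_in : (σ * τ).subtypePerm hστ = σ.subtypePerm hσ := by
    ext x
    simp [Perm.notMem_support.mp (hd.mem_imp x.2)]
  have hστ_out : (σ * τ).subtypePerm (p := (· ∉ σ.support)) (fun x => not_congr (hστ x)) =
      τ.subtypePerm (p := (· ∉ σ.support)) (fun x => not_congr (hτ x)) := by
    ext x
    simp [Perm.notMem_support.mp ((not_congr (hτ x)).mpr x.2)]
  have hσ_out : σ.subtypePerm (p := (· ∉ σ.support)) (fun x => not_congr (hσ x)) = 1 := by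
    ext x
    simp [Perm.notMem_support.mp x.2]
  have hτ_in : τ.subtypePerm hτ = 1 := by
    ext x
    simp [Perm.notMem_support.mp (hd.mem_imp x.2)]
  rw [hστ_in, hστ_out, hσ_out, hτ_in, Perm.subtypePerm_one, Perm.subtypePerm_one]
  ring

theorem charpoly_permMatrix {K : Type*} [Field K] (σ : Perm n) :
    (σ.permMatrix K).charpoly =
      (X - 1) ^ (Fintype.card n - #σ.support) * (σ.cycleType.map fun ℓ => X ^ ℓ - 1).prod := by
  induction σ using Perm.cycle_induction_on with
  | base_one => simp [charpoly_one]
  | base_cycles c hc =>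
    have hs (x : n) : c (c x) ≠ c x ↔ c x ≠ x := c.injective.ne_iff
    have hcard : Fintype.card {x // c x ≠ x} = #c.support := Fintype.card_subtype _
    have hcycle : (c.subtypePerm (p := fun x => c x ≠ x) hs).cycleType =
        {Fintype.card {x // c x ≠ x}} := by
      rw [← Perm.cycleType_ofSubtype, Perm.ofSubtype_subtypePerm _ fun _ => id, hc.cycleType,
        hcard]
    have hfix : c.subtypePerm (p := fun x => ¬ c x ≠ x) (fun x => not_congr (hs x)) = 1 := by
      ext x
      simpa using x.2
    rw [charpoly_permMatrix_eq_mul_subtypePerm c (fun x => c x ≠ x) hs,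
      charpoly_permMatrix_of_cycleType_eq_card hcycle, hfix, permMatrix_one, charpoly_one, hcard,
      hc.cycleType, Fintype.card_subtype_compl, hcard]
    simp [mul_comm]
  | induction_disjoint σ τ hd _ ihσ ihτ =>
    have hle : #σ.support + #τ.support ≤ Fintype.card n :=
      hd.card_support_mul ▸ (σ * τ).support.card_le_univ
    have hpow : (X - 1 : K[X]) ^ (Fintype.card n - #σ.support) *
        (X - 1) ^ (Fintype.card n - #τ.support) =
        (X - 1) ^ (Fintype.card n - (#σ.support + #τ.support)) * (X - 1) ^ Fintype.card n := by
      rw [← pow_add, ← pow_add]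
      congr 1
      omega
    apply mul_right_cancel₀ (pow_ne_zero (Fintype.card n) (X_sub_C_ne_zero (1 : K)))
    rw [C_1, charpoly_permMatrix_mul_of_disjoint hd, ihσ, ihτ, hd.cycleType_mul,
      hd.card_support_mul, Multiset.map_add, Multiset.prod_add]
    linear_combination (σ.cycleType.map fun ℓ => (X : K[X]) ^ ℓ - 1).prod *
      (τ.cycleType.map fun ℓ => (X : K[X]) ^ ℓ - 1).prod * hpow

theorem det_eq_mul_det_updateRow_one {A : Matrix n n R} {s : R} (hA : ∀ j, ∑ i, A i j = s)
    (i₀ : n) : A.det = s * (A.updateRow i₀ 1).det := by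
  have hsum : ∑ i, (1 : n → R) i • A i = s • 1 := by
    ext j
    simp only [Pi.one_apply, one_smul, Pi.smul_apply, smul_eq_mul, mul_one]
    exact (Finset.sum_apply j _ _).trans (hA j)
  rw [← det_updateRow_smul, ← hsum, det_updateRow_sum, Pi.one_apply, one_smul]

theorem det_add_ones_mul (A : Matrix n n R) {s : R} (hA : ∀ j, ∑ i, A i j = s) :
    (A + of fun _ _ => 1).det * s = A.det * (s + Fintype.card n) := by
  rcases isEmpty_or_nonempty n with _ | ⟨⟨i₀⟩⟩
  · simp
  have hA' (j : n) : ∑ i, (A + of fun _ _ => 1 : Matrix n n R) i j = s + Fintype.card n := by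
    simp [Finset.sum_add_distrib, hA]
  have hrow : ((A + of fun _ _ => (1 : R)).updateRow i₀ 1).det = (A.updateRow i₀ 1).det := by
    refine det_eq_of_forall_row_eq_smul_add_const (fun i => if i = i₀ then 0 else 1) i₀ (by simp)
      fun i j => ?_
    by_cases hi : i = i₀ <;> simp [updateRow_apply, hi]
  rw [det_eq_mul_det_updateRow_one hA' i₀, det_eq_mul_det_updateRow_one hA i₀, hrow]
  ring

theorem charpoly_sub_ones_mul (B : Matrix n n R) {r : R} (hB : ∀ j, ∑ i, B i j = r) :
    (B - of fun _ _ => 1).charpoly * (X - C r) =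
      B.charpoly * (X - C r + (Fintype.card n : R[X])) := by
  have hchar : charmatrix (B - of fun _ _ => 1) = charmatrix B + of fun _ _ => 1 := by
    ext i j : 1
    by_cases hij : i = j <;> simp [hij] <;> ring
  have hsum (j : n) : ∑ i, charmatrix B i j = X - C r := by
    simp [charmatrix_apply, diagonal_apply, Finset.sum_sub_distrib, ← map_sum, hB]
  rw [charpoly, hchar, det_add_ones_mul _ hsum, charpoly]

end Matrix

theorem charpoly_simplex_laplacian_general (k : ℕ)
    (σ : Equiv.Perm (Fin (k + 1))) (hσ : ∀ j, σ j ≠ j) :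
    Matrix.charpoly
        ((k : ℚ) • (1 : Matrix (Fin (k + 1)) (Fin (k + 1)) ℚ) +
          (Matrix.of fun i j => if σ j = i then (1 : ℚ) else 0) -
          Matrix.of fun _ _ => (1 : ℚ)) *
        (Polynomial.X - Polynomial.C ((k : ℚ) + 1)) =
      Polynomial.X *
        (σ.cycleType.map fun ℓ =>
          (Polynomial.X - Polynomial.C (k : ℚ)) ^ ℓ - 1).prod := by
  set Q : Matrix (Fin (k + 1)) (Fin (k + 1)) ℚ := of fun i j => if σ j = i then 1 else 0
  have hQ : Q = (σ.permMatrix ℚ)ᵀ := by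
    ext i j
    simp [Q, PEquiv.toMatrix_apply]
  have hcol (j : Fin (k + 1)) : ∑ i, ((k : ℚ) • 1 + Q) i j = k + 1 := by
    simp [Q, Finset.sum_add_distrib, one_apply]
  have hshift : ((k : ℚ) • 1 + Q).charpoly = Q.charpoly.comp (X - C (k : ℚ)) := by
    rw [show (k : ℚ) • 1 + Q = Q - scalar _ (-(k : ℚ)) by
        rw [map_neg, sub_neg_eq_add, add_comm Q, scalar_apply, smul_one_eq_diagonal],
      charpoly_sub_scalar, C_neg, ← sub_eq_add_neg]
  have hsupp : σ.support = univ := by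
    ext x
    simp [hσ x]
  rw [charpoly_sub_ones_mul _ hcol, hshift, hQ, charpoly_transpose, charpoly_permMatrix, hsupp,
    card_univ, Nat.sub_self, pow_zero, one_mul, multiset_prod_comp]
  simp [Multiset.map_map, mul_comm]

/-- For a derangement `σ` of `Fin (k+1)` with permutation matrix `M_σ`, all-ones matrix `J`
and identity `I`, one has
`charpoly (k·I + M_σ - J) · (X - (k+1)) = X · ∏_{ℓ ∈ cycleType σ} ((X - k)^ℓ - 1)`. -/
theorem charpoly_simplex_laplacian (k : ℕ) (hk : 2 ≤ k)
    (σ : Equiv.Perm (Fin (k + 1))) (hσ : ∀ j, σ j ≠ j) :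
    Matrix.charpoly
        ((k : ℚ) • (1 : Matrix (Fin (k + 1)) (Fin (k + 1)) ℚ) +
          (Matrix.of fun i j => if σ j = i then (1 : ℚ) else 0) -
          Matrix.of fun _ _ => (1 : ℚ)) *
        (Polynomial.X - Polynomial.C ((k : ℚ) + 1)) =
      Polynomial.X *
        (σ.cycleType.map fun ℓ =>
          (Polynomial.X - Polynomial.C (k : ℚ)) ^ ℓ - 1).prod :=
  charpoly_simplex_laplacian_general k σ hσ
end

section
/- For k ≥ 2 let S_k := Σ_{σ ∈ 𝔇_{k+1}} Π_{ℓ ∈ cycleType(σ)} (k^ℓ + (−1)^{ℓ+1}), where 𝔇_{k+1} is the set of derangements of Fin (k+1), and let C_k := S_k / ((k−1)(k+1)). Then log C_k = (2 + o(1)) · k · log k as k → ∞; that is, lim_{k→∞} (log C_k) / (k · log k) = 2. -/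
/-!
The cycle lengths of a derangement of `Fin (k + 1)` sum to `k + 1`, and each factor
`k ^ ℓ ± 1` lies between `(k / 2) ^ ℓ` and `(2 * k) ^ ℓ`; so every summand of
`S_k = derangementCycleSum (k + 1) k` lies between `(k / 2) ^ (k + 1)` and `(2 * k) ^ (k + 1)`.
The number of derangements lies between `k !` and `(k + 1) !`, hence by Stirling
`log S_k = 2 k log k + O(k)`, while the denominator `(k - 1)(k + 1)` only costs `O(log k)`.
-/

open Finset Filter Real Equiv Asymptotics
open scoped Nat

theorem Multiset.prod_map_pow_eq_pow_sum {M : Type*} [CommMonoid M] (a : M) (m : Multiset ℕ) :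
    (m.map (a ^ ·)).prod = a ^ m.sum := by
  induction m using Multiset.induction_on <;> simp_all [pow_add]

lemma div_two_pow_le_pow_add_neg_one_pow {x : ℝ} (hx : 2 ≤ x) {ℓ : ℕ} (hℓ : ℓ ≠ 0) :
    (x / 2) ^ ℓ ≤ x ^ ℓ + (-1) ^ (ℓ + 1) := by
  have hsign := neg_abs_le ((-1 : ℝ) ^ (ℓ + 1))
  rw [abs_neg_one_pow] at hsign
  have hxℓ : x ≤ x ^ ℓ := le_self_pow₀ (by linarith) hℓ
  have h2ℓ : 2 ≤ (2 : ℝ) ^ ℓ := le_self_pow₀ one_le_two hℓ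
  calc (x / 2) ^ ℓ = x ^ ℓ / 2 ^ ℓ := div_pow x 2 ℓ
    _ ≤ x ^ ℓ / 2 := by gcongr
    _ ≤ x ^ ℓ + (-1) ^ (ℓ + 1) := by linarith

lemma pow_add_neg_one_pow_le_two_mul_pow {x : ℝ} (hx : 1 ≤ x) {ℓ : ℕ} (hℓ : ℓ ≠ 0) :
    x ^ ℓ + (-1) ^ (ℓ + 1) ≤ (2 * x) ^ ℓ := by
  have hsign := le_abs_self ((-1 : ℝ) ^ (ℓ + 1))
  rw [abs_neg_one_pow] at hsign
  have hxℓ : 1 ≤ x ^ ℓ := one_le_pow₀ hx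
  have h2ℓ : 2 ≤ (2 : ℝ) ^ ℓ := le_self_pow₀ one_le_two hℓ
  calc x ^ ℓ + (-1) ^ (ℓ + 1) ≤ 2 * x ^ ℓ := by linarith
    _ ≤ 2 ^ ℓ * x ^ ℓ := by gcongr
    _ = (2 * x) ^ ℓ := (mul_pow 2 x ℓ).symm

theorem numDerangements_le_factorial (n : ℕ) : numDerangements n ≤ n ! := by
  rw [← card_derangements_fin_eq_numDerangements]
  exact (Fintype.card_subtype_le _).trans_eq (by rw [Fintype.card_perm, Fintype.card_fin])

theorem factorial_le_numDerangements_succ {n : ℕ} (hn : n ≠ 0) :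
    n ! ≤ numDerangements (n + 1) := by
  induction n, Nat.one_le_iff_ne_zero.mpr hn using Nat.le_induction with
  | base => simp [numDerangements_add_two]
  | succ n _ ih =>
    calc (n + 1)! = (n + 1) * n ! := Nat.factorial_succ n
      _ ≤ (n + 1) * (numDerangements n + numDerangements (n + 1)) := by gcongr; omega
      _ = numDerangements (n + 2) := (numDerangements_add_two n).symm

theorem Equiv.Perm.sum_cycleType_of_mem_derangements {α : Type*} [Fintype α] [DecidableEq α]
    {σ : Perm α} (hσ : σ ∈ derangements α) : σ.cycleType.sum = Fintype.card α := by
  rw [Perm.sum_cycleType, ← Finset.card_univ]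
  congr
  ext j
  simpa [Perm.mem_support] using hσ j

lemma log_factorial_ge (n : ℕ) : n * log n - n ≤ log n ! := by
  rcases eq_or_ne n 0 with rfl | hn
  · simp
  have := Stirling.le_log_factorial_stirling hn
  have : 0 ≤ log n := log_natCast_nonneg n
  have : 0 ≤ log (2 * π) := log_nonneg (by linarith [pi_gt_three])
  linarith

lemma log_factorial_le (n : ℕ) : log n ! ≤ n * log n :=
  calc log n ! ≤ log ((n : ℝ) ^ n) :=
        log_le_log (by positivity) (by exact_mod_cast Nat.factorial_le_pow n)
    _ = n * log n := log_pow n n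

lemma prod_cycleType_mem_Icc {α : Type*} [Fintype α] [DecidableEq α] {x : ℝ} (hx : 2 ≤ x)
    {σ : Perm α} (hσ : ∀ j, σ j ≠ j) :
    (σ.cycleType.map fun ℓ => x ^ ℓ + (-1) ^ (ℓ + 1)).prod ∈
      Set.Icc ((x / 2) ^ Fintype.card α) ((2 * x) ^ Fintype.card α) := by
  have hsum : σ.cycleType.sum = Fintype.card α := Perm.sum_cycleType_of_mem_derangements hσ
  have hℓ : ∀ ℓ ∈ σ.cycleType, ℓ ≠ 0 := fun ℓ h ↦ by
    have := Perm.two_le_of_mem_cycleType h; omega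
  rw [← hsum, ← Multiset.prod_map_pow_eq_pow_sum, ← Multiset.prod_map_pow_eq_pow_sum]
  constructor
  · exact Multiset.prod_map_le_prod_map₀ _ _ (fun _ _ ↦ by positivity)
      fun ℓ h ↦ div_two_pow_le_pow_add_neg_one_pow hx (hℓ ℓ h)
  · exact Multiset.prod_map_le_prod_map₀ _ _
      (fun ℓ h ↦ (by positivity : (0 : ℝ) ≤ (x / 2) ^ ℓ).trans
        (div_two_pow_le_pow_add_neg_one_pow hx (hℓ ℓ h)))
      fun ℓ h ↦ pow_add_neg_one_pow_le_two_mul_pow (by linarith) (hℓ ℓ h)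

noncomputable def derangementCycleSum (n : ℕ) (x : ℝ) : ℝ :=
  ∑ σ ∈ univ.filter (fun σ : Perm (Fin n) => ∀ j, σ j ≠ j),
    (σ.cycleType.map fun ℓ => x ^ ℓ + (-1) ^ (ℓ + 1)).prod

theorem card_filter_forall_apply_ne_eq_numDerangements (n : ℕ) :
    #(univ.filter (fun σ : Perm (Fin n) => ∀ j, σ j ≠ j)) = numDerangements n := by
  rw [← card_derangements_fin_eq_numDerangements, Fintype.card_subtype]
  congr

theorem derangementCycleSum_mem_Icc (n : ℕ) {x : ℝ} (hx : 2 ≤ x) :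
    derangementCycleSum n x ∈
      Set.Icc (numDerangements n * (x / 2) ^ n) (numDerangements n * (2 * x) ^ n) := by
  rw [← card_filter_forall_apply_ne_eq_numDerangements, ← nsmul_eq_mul, ← nsmul_eq_mul]
  have hterm σ (hσ : σ ∈ univ.filter (fun σ : Perm (Fin n) => ∀ j, σ j ≠ j)) := by
    simpa using prod_cycleType_mem_Icc hx (mem_filter.mp hσ).2
  exact ⟨card_nsmul_le_sum _ _ _ fun σ hσ ↦ (hterm σ hσ).1,
    sum_le_card_nsmul _ _ _ fun σ hσ ↦ (hterm σ hσ).2⟩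

theorem derangementCycleSum_succ_mem_Icc {k : ℕ} (hk : k ≠ 0) {x : ℝ} (hx : 2 ≤ x) :
    derangementCycleSum (k + 1) x ∈
      Set.Icc (k ! * (x / 2) ^ (k + 1)) ((k + 1)! * (2 * x) ^ (k + 1)) := by
  obtain ⟨hlower, hupper⟩ := derangementCycleSum_mem_Icc (k + 1) hx
  have hD_lower : (k ! : ℝ) ≤ numDerangements (k + 1) := by
    exact_mod_cast factorial_le_numDerangements_succ hk
  have hD_upper : (numDerangements (k + 1) : ℝ) ≤ (k + 1)! := by
    exact_mod_cast numDerangements_le_factorial _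
  have hx0 : 0 ≤ x := by linarith
  exact ⟨(mul_le_mul_of_nonneg_right hD_lower (by positivity)).trans hlower,
    hupper.trans (mul_le_mul_of_nonneg_right hD_upper (by positivity))⟩

lemma le_log_derangementCycleSum_succ {k : ℕ} (hk : 2 ≤ k) :
    k * log k - k + (k + 1) * (log k - log 2) ≤ log (derangementCycleSum (k + 1) k) := by
  have hk0 : (0 : ℝ) < k := by positivity
  calc k * log k - k + (k + 1) * (log k - log 2)
      ≤ log k ! + log (((k : ℝ) / 2) ^ (k + 1)) := by
        rw [log_pow, log_div hk0.ne' two_ne_zero]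
        push_cast
        linarith [log_factorial_ge k]
    _ = log (k ! * ((k : ℝ) / 2) ^ (k + 1)) := (log_mul (by positivity) (by positivity)).symm
    _ ≤ log (derangementCycleSum (k + 1) k) := log_le_log (by positivity)
        (derangementCycleSum_succ_mem_Icc (by omega) (by exact_mod_cast hk)).1

lemma log_derangementCycleSum_succ_le {k : ℕ} (hk : 2 ≤ k) :
    log (derangementCycleSum (k + 1) k) ≤ 2 * (k + 1) * (log 2 + log k) := by
  have hk2 : (2 : ℝ) ≤ k := by exact_mod_cast hk
  have hk0 : (0 : ℝ) < k := by positivity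
  obtain ⟨hlower, hupper⟩ := derangementCycleSum_succ_mem_Icc (k := k) (by omega) hk2
  have hlog_succ : log (k + 1) ≤ log 2 + log k := by
    rw [← log_mul two_ne_zero hk0.ne']
    exact log_le_log (by positivity) (by linarith)
  calc log (derangementCycleSum (k + 1) k) ≤ log ((k + 1)! * (2 * (k : ℝ)) ^ (k + 1)) :=
        log_le_log (hlower.trans_lt' (by positivity)) hupper
    _ = log (k + 1)! + (k + 1) * (log 2 + log k) := by
        rw [log_mul (by positivity) (by positivity), log_pow, log_mul two_ne_zero hk0.ne']
        push_cast
        ring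
    _ ≤ (k + 1) * log (k + 1) + (k + 1) * (log 2 + log k) := by
        simpa using log_factorial_le (k + 1)
    _ ≤ 2 * (k + 1) * (log 2 + log k) := by nlinarith

theorem abs_log_derangementCycleSum_div_sub_le {k : ℕ} (hk : 2 ≤ k) :
    |log (derangementCycleSum (k + 1) k / ((k - 1) * (k + 1))) - 2 * (k * log k)|
      ≤ 4 * k := by
  have hk2 : (2 : ℝ) ≤ k := by exact_mod_cast hk
  have hS_pos : 0 < derangementCycleSum (k + 1) k :=
    (derangementCycleSum_succ_mem_Icc (by omega) hk2).1.trans_lt' (by positivity)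
  have hden_pos : (0 : ℝ) < (k - 1) * (k + 1) := by nlinarith
  have hlog_den_nonneg : 0 ≤ log (((k : ℝ) - 1) * (k + 1)) := log_nonneg (by nlinarith)
  have hlog_den_le : log (((k : ℝ) - 1) * (k + 1)) ≤ 2 * log k :=
    calc log (((k : ℝ) - 1) * (k + 1)) ≤ log ((k : ℝ) ^ 2) :=
          log_le_log hden_pos (by nlinarith)
      _ = 2 * log k := by rw [log_pow]; norm_num
  have hlog2 : log 2 ≤ 1 := by linarith [log_le_sub_one_of_pos (two_pos (α := ℝ))]
  have hlogk : log k ≤ k - 1 := log_le_sub_one_of_pos (by positivity)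
  have hk1_log2 : (k + 1) * log 2 ≤ (k + 1) * 1 := by gcongr
  rw [log_div hS_pos.ne' hden_pos.ne', abs_le]
  constructor <;>
    linarith [le_log_derangementCycleSum_succ hk, log_derangementCycleSum_succ_le hk]

/-- Logarithmic asymptotics of the associated coefficient of the `k`-uniform simplex:
with `C_k = (1/((k-1)(k+1))) Σ_{σ ∈ 𝔇_{k+1}} ∏_{ℓ ∈ cycleType σ}(k^ℓ + (-1)^{ℓ+1})`,
one has `log C_k = (2 + o(1)) k log k`, i.e. `lim_{k→∞} (log C_k)/(k log k) = 2`. -/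
theorem simplex_coefficient_log_asymptotics :
    Filter.Tendsto
      (fun k : ℕ =>
        Real.log
            ((∑ σ ∈ Finset.univ.filter
                  (fun σ : Equiv.Perm (Fin (k + 1)) => ∀ j, σ j ≠ j),
                (σ.cycleType.map fun ℓ => (k : ℝ) ^ ℓ + (-1 : ℝ) ^ (ℓ + 1)).prod) /
              (((k : ℝ) - 1) * ((k : ℝ) + 1))) /
          ((k : ℝ) * Real.log k))
      Filter.atTop (nhds 2) := by
  set f : ℕ → ℝ := fun k ↦ log (derangementCycleSum (k + 1) k / ((k - 1) * (k + 1)))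
  set g : ℕ → ℝ := fun k ↦ k * log k
  change Tendsto (fun k ↦ f k / g k) atTop (nhds 2)
  have hg : (fun k : ℕ ↦ (k : ℝ)) =o[atTop] g := by
    simpa using (isBigO_refl (fun k : ℕ ↦ (k : ℝ)) atTop).mul_isLittleO
      (isLittleO_const_log_atTop (c := 1).comp_tendsto tendsto_natCast_atTop_atTop)
  have herr : (fun k ↦ f k - 2 * g k) =o[atTop] g := by
    refine (IsBigO.of_bound 4 ?_).trans_isLittleO hg
    filter_upwards [eventually_ge_atTop 2] with k hk
    simpa using abs_log_derangementCycleSum_div_sub_le hk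
  have hg_ne : ∀ᶠ k in atTop, g k ≠ 0 := by
    filter_upwards [eventually_ge_atTop 2] with k hk
    have : (2 : ℝ) ≤ k := by exact_mod_cast hk
    exact mul_ne_zero (by positivity) (log_pos (by linarith)).ne'
  have hlim : Tendsto (fun k ↦ (f k - 2 * g k) / g k + 2) atTop (nhds 2) := by
    simpa using herr.tendsto_div_nhds_zero.add_const 2
  refine hlim.congr' ?_
  filter_upwards [hg_ne] with k hk
  field_simp
  ring
end

section
/- Let f : ℕ → ℕ → ℚ satisfy: f(n, 0) = 1 for all n ≥ 3; f(3, t) = (−1)^t · binom(3, t) for all t; and the convolution recursion f(n+1, t) = Σ_{j=0}^{t} f(n, j) · f(n, t−j) for all n ≥ 3 and all t. Then for every n ≥ 3 and every t, f(n, t) = (−1)^t · binom(3·2^{n−3}, t). In particular f(n, t) ≠ 0 if and only if t ≤ 3·2^{n−3}, so the coefficient threshold of the single 3-uniform edge is Th_v(e) = 3 · (3·2^{v−3}) = 9·2^{v−3} for v ≥ 3. -/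
open Finset

section SignedChoose

variable {R : Type*}

/-- Chu–Vandermonde for the signed coefficients of `(1 - X)^m`. -/
theorem sum_range_signed_choose_mul [CommRing R] (m k t : ℕ) :
    ∑ j ∈ range (t + 1),
        (-1 : R) ^ j * (m.choose j : R) * ((-1 : R) ^ (t - j) * (k.choose (t - j) : R)) =
      (-1 : R) ^ t * ((m + k).choose t : R) := by
  have hsign : ∀ j ∈ range (t + 1),
      (-1 : R) ^ j * (m.choose j : R) * ((-1 : R) ^ (t - j) * (k.choose (t - j) : R)) =
        (-1 : R) ^ t * ((m.choose j * k.choose (t - j) : ℕ) : R) := by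
    intro j hj
    rw [← Nat.add_sub_of_le (Nat.lt_succ_iff.mp (mem_range.mp hj)), Nat.add_sub_cancel_left,
      pow_add]
    push_cast
    ring
  rw [sum_congr rfl hsign, ← mul_sum, ← Nat.cast_sum,
    ← Nat.sum_antidiagonal_eq_sum_range_succ (fun i j ↦ m.choose i * k.choose j),
    ← Nat.add_choose_eq]

theorem signed_choose_ne_zero_iff [Ring R] [CharZero R] (N t : ℕ) :
    (-1 : R) ^ t * (N.choose t : R) ≠ 0 ↔ t ≤ N := by
  rw [ne_eq, ((isUnit_neg_one : IsUnit (-1 : R)).pow t).mul_right_eq_zero, ← ne_eq,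
    Nat.cast_ne_zero, Nat.choose_ne_zero_iff]

end SignedChoose

/-- Row `n` lists the coefficients of `(1 - X)^(m·2^(n-n₀))`: self-convolution squares the
polynomial. -/
theorem eq_signed_choose_of_self_convolution {R : Type*} [CommRing R] {f : ℕ → ℕ → R}
    {n₀ m : ℕ} (hbase : ∀ t, f n₀ t = (-1 : R) ^ t * (m.choose t : R))
    (hrec : ∀ n, n₀ ≤ n → ∀ t,
      f (n + 1) t = ∑ j ∈ range (t + 1), f n j * f n (t - j)) :
    ∀ n, n₀ ≤ n → ∀ t, f n t = (-1 : R) ^ t * ((m * 2 ^ (n - n₀)).choose t : R) := by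
  intro n hn
  induction n, hn using Nat.le_induction with
  | base => simpa using hbase
  | succ n hn ih =>
    intro t
    have hdouble : m * 2 ^ (n + 1 - n₀) = m * 2 ^ (n - n₀) + m * 2 ^ (n - n₀) := by
      rw [Nat.sub_add_comm hn, pow_succ]
      ring
    simp only [hrec n hn, ih, hdouble, sum_range_signed_choose_mul]

theorem single_edge_threshold_general (f : ℕ → ℕ → ℚ)
    (h3 : ∀ t, f 3 t = (-1 : ℚ) ^ t * (Nat.choose 3 t : ℚ))
    (hrec : ∀ n, 3 ≤ n → ∀ t,
      f (n + 1) t = ∑ j ∈ Finset.range (t + 1), f n j * f n (t - j)) :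
    ∀ n, 3 ≤ n → ∀ t,
      f n t = (-1 : ℚ) ^ t * (Nat.choose (3 * 2 ^ (n - 3)) t : ℚ) ∧
        (f n t ≠ 0 ↔ t ≤ 3 * 2 ^ (n - 3)) := by
  intro n hn t
  have hf := eq_signed_choose_of_self_convolution h3 hrec n hn t
  exact ⟨hf, hf ▸ signed_choose_ne_zero_iff _ t⟩

/-- The codegree-`3t` contribution `f n t` of a single 3-uniform edge on an ambient vertex
set of size `n` satisfies `f n t = (-1)^t · binom(3·2^{n-3}, t)`, given the base cases and
the convolution recursion; in particular `f n t ≠ 0` iff `t ≤ 3·2^{n-3}`, so the coefficient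
threshold of the single 3-uniform edge is `9·2^{n-3}`. -/
theorem single_edge_threshold (f : ℕ → ℕ → ℚ)
    (h0 : ∀ n, 3 ≤ n → f n 0 = 1)
    (h3 : ∀ t, f 3 t = (-1 : ℚ) ^ t * (Nat.choose 3 t : ℚ))
    (hrec : ∀ n, 3 ≤ n → ∀ t,
      f (n + 1) t = ∑ j ∈ Finset.range (t + 1), f n j * f n (t - j)) :
    ∀ n, 3 ≤ n → ∀ t,
      f n t = (-1 : ℚ) ^ t * (Nat.choose (3 * 2 ^ (n - 3)) t : ℚ) ∧
        (f n t ≠ 0 ↔ t ≤ 3 * 2 ^ (n - 3)) :=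
  single_edge_threshold_general f h3 hrec
end
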